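/- arXiv:1608.04819 — 3 statements merged into one kernel-verified Lean document; each statement's English description precedes it below -/
import Mathlib

section
/- Let f : ℤ → ℝ be the step signal f_j = α for j ≤ i and f_j = β for j > i, where α ≠ β. Then for 0 ≤ ℓ < k, the k-th order finite difference at index m = i - ℓ equals (α - β)·C(k-1, ℓ)·(-1)^{k-ℓ}. -/
/-!
On the window `i - ℓ, …, i - ℓ + k` the signal equals `α` at the first `ℓ + 1` points and `β`
at the rest. Since the full alternating binomial sum `∑ (-1)^j C(k, j)` vanishes for `k > 0`,
the finite difference is `(α - β)` times the partial sum over `j ≤ ℓ`, which telescopes by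
Pascal's rule to `(-1)^ℓ C(k - 1, ℓ)`.
-/

open Finset

section CommRing

variable {R : Type*} [CommRing R]

theorem alternating_sum_range_choose_eq_choose (n m : ℕ) :
    ∑ j ∈ range (m + 1), (-1 : R) ^ j * ((n + 1).choose j : R) =
      (-1) ^ m * (n.choose m : R) := by
  simpa using
    congrArg (Int.cast : ℤ → R) (Int.alternating_sum_range_choose_eq_choose (n := n) (m := m))

theorem alternating_sum_range_choose_of_ne_zero {n : ℕ} (hn : n ≠ 0) :
    ∑ j ∈ range (n + 1), (-1 : R) ^ j * (n.choose j : R) = 0 := by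
  simpa using congrArg (Int.cast : ℤ → R) (Int.alternating_sum_range_choose_of_ne hn)

theorem finite_diff_step_eq {k ℓ : ℕ} (hℓ : ℓ < k) {α β : R} {g : ℕ → R}
    (hle : ∀ j ≤ ℓ, g j = α) (hgt : ∀ j, ℓ < j → g j = β) :
    ∑ j ∈ range (k + 1), (-1 : R) ^ (j + k) * (k.choose j : R) * g j =
      (α - β) * ((k - 1).choose ℓ : R) * (-1) ^ (k - ℓ) := by
  obtain ⟨n, rfl⟩ : ∃ n, k = n + 1 := ⟨k - 1, by omega⟩
  set c : ℕ → R := fun j => (-1) ^ j * ((n + 1).choose j : R)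
  have hsplit : ℓ + 1 ≤ n + 1 + 1 := by omega
  have head : ∑ j ∈ range (ℓ + 1), c j = (-1) ^ ℓ * (n.choose ℓ : R) :=
    alternating_sum_range_choose_eq_choose n ℓ
  have tail : ∑ j ∈ Ico (ℓ + 1) (n + 1 + 1), c j = -((-1) ^ ℓ * (n.choose ℓ : R)) := by
    have total : ∑ j ∈ range (n + 1 + 1), c j = 0 :=
      alternating_sum_range_choose_of_ne_zero n.succ_ne_zero
    rw [← sum_range_add_sum_Ico _ hsplit, head] at total
    exact eq_neg_of_add_eq_zero_right total
  calc ∑ j ∈ range (n + 1 + 1), (-1 : R) ^ (j + (n + 1)) * ((n + 1).choose j : R) * g j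
      = (-1) ^ (n + 1) *
          (α * ∑ j ∈ range (ℓ + 1), c j + β * ∑ j ∈ Ico (ℓ + 1) (n + 1 + 1), c j) := by
        rw [← sum_range_add_sum_Ico _ hsplit, mul_sum, mul_sum, mul_add, mul_sum, mul_sum]
        congr 1 <;> refine sum_congr rfl fun j hj => ?_
        · rw [hle j (by simpa [Nat.lt_succ_iff] using hj), pow_add]; ring
        · rw [hgt j (by simp at hj; omega), pow_add]; ring
    _ = (α - β) * (n.choose ℓ : R) * ((-1) ^ (n + 1 - ℓ) * ((-1) ^ ℓ * (-1) ^ ℓ)) := by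
        rw [head, tail, ← pow_sub_mul_pow (-1 : R) hℓ.le]; ring
    _ = (α - β) * ((n + 1 - 1).choose ℓ : R) * (-1) ^ (n + 1 - ℓ) := by
        rw [← mul_pow, neg_one_mul, neg_neg, one_pow, mul_one, Nat.add_sub_cancel]

end CommRing

theorem step_signal_finite_diff_value_general (k : ℕ) (i : ℤ) (α β : ℝ)
    (f : ℤ → ℝ)
    (hle : ∀ j : ℤ, j ≤ i → f j = α) (hgt : ∀ j : ℤ, i < j → f j = β)
    (ℓ : ℕ) (hℓ : ℓ < k) :
    ∑ j ∈ Finset.range (k + 1), (-1 : ℝ) ^ (j + k) * (k.choose j : ℝ) * f (i - ℓ + j) =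
      (α - β) * ((k - 1).choose ℓ : ℝ) * (-1 : ℝ) ^ (k - ℓ) :=
  finite_diff_step_eq hℓ (fun j hj => hle _ (by omega)) (fun j hj => hgt _ (by omega))

theorem step_signal_finite_diff_value (k : ℕ) (hk : 0 < k) (i : ℤ) (α β : ℝ)
    (hαβ : α ≠ β) (f : ℤ → ℝ)
    (hle : ∀ j : ℤ, j ≤ i → f j = α) (hgt : ∀ j : ℤ, i < j → f j = β)
    (ℓ : ℕ) (hℓ : ℓ < k) :
    ∑ j ∈ Finset.range (k + 1), (-1 : ℝ) ^ (j + k) * (k.choose j : ℝ) * f (i - ℓ + j) =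
      (α - β) * ((k - 1).choose ℓ : ℝ) * (-1 : ℝ) ^ (k - ℓ) :=
  step_signal_finite_diff_value_general k i α β f hle hgt ℓ hℓ
end

section
/- Let f : ℤ → ℝ be the step signal f_j = α for j ≤ i and f_j = β for j > i, with α ≠ β. Then the total ℓ¹ norm of the k-th order finite difference over all indices equals 2^{k-1}|α - β|; that is, ∑_{m ∈ ℤ} |(T_k f)_m| = 2^{k-1}|α - β|. -/
/-!
The sum in the statement is the `k`-th forward difference `Δ^k f` at `m`. The first difference
of the step signal is the impulse `(β - α) δ_i`, and `Δ^(k-1) δ_i` takes the value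
`± C(k-1, t)` at `i - t` for `t < k` and vanishes elsewhere, so the `ℓ¹` norm is
`|β - α| ∑_t C(k-1, t) = 2^(k-1) |α - β|`.
-/

open Finset fwdDiff

lemma fwdDiff_iter_one_eq_sum {R : Type*} [Ring R] (f : ℤ → R) (n : ℕ) (m : ℤ) :
    (Δ_[1])^[n] f m = ∑ j ∈ range (n + 1), (-1 : R) ^ (j + n) * n.choose j * f (m + j) := by
  rw [fwdDiff_iter_eq_sum_shift]
  refine sum_congr rfl fun j hj => ?_
  have hjn : j ≤ n := Nat.lt_succ_iff.mp (mem_range.mp hj)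
  have hparity : j + n = (n - j) + 2 * j := by omega
  rw [zsmul_eq_mul, nsmul_one, hparity, pow_add, pow_mul]
  push_cast
  simp

lemma fwdDiff_iter_single_apply_of_lt {G : Type*} [AddCommGroup G] {i m : ℤ} (c : G) (n : ℕ)
    (him : i < m) : (Δ_[1])^[n] (Pi.single i c) m = 0 := by
  rw [fwdDiff_iter_eq_sum_shift]
  exact sum_eq_zero fun j _ => by
    rw [nsmul_one, Pi.single_eq_of_ne (by omega), smul_zero]

lemma fwdDiff_iter_single_apply_sub {G : Type*} [AddCommGroup G] (i : ℤ) (c : G) (n t : ℕ) :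
    (Δ_[1])^[n] (Pi.single i c) (i - t) = ((-1 : ℤ) ^ (n - t) * n.choose t) • c := by
  rw [fwdDiff_iter_eq_sum_shift]
  have hshift : ∀ j : ℕ, (Pi.single i c : ℤ → G) (i - t + j • 1) = if j = t then c else 0 := by
    intro j
    rw [nsmul_one]
    by_cases hj : j = t
    · simp [hj]
    · rw [if_neg hj, Pi.single_eq_of_ne (by omega)]
  simp only [hshift, smul_ite, smul_zero, sum_ite_eq', mem_range]
  split_ifs with ht
  · rfl
  · simp [Nat.choose_eq_zero_of_lt (by omega : n < t)]

theorem finsum_abs_fwdDiff_iter_single (i : ℤ) (c : ℝ) (n : ℕ) :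
    ∑ᶠ m, |(Δ_[1])^[n] (Pi.single i c) m| = 2 ^ n * |c| := by
  have hsupp : (Function.support fun m => |(Δ_[1])^[n] (Pi.single i c) m|) ⊆
      ((range (n + 1)).image fun t : ℕ => i - t : Finset ℤ) := by
    intro m hm
    rw [Function.mem_support, abs_ne_zero] at hm
    obtain ⟨t, rfl⟩ : ∃ t : ℕ, m = i - t := by
      by_contra! h
      exact hm (fwdDiff_iter_single_apply_of_lt c n (by have := h (i - m).toNat; omega))
    rw [fwdDiff_iter_single_apply_sub] at hm
    have htn : t ≤ n := by
      by_contra h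
      simp [Nat.choose_eq_zero_of_lt (by omega : n < t)] at hm
    simp only [coe_image, coe_range, Set.mem_image, Set.mem_Iio]
    exact ⟨t, by omega, rfl⟩
  rw [finsum_eq_sum_of_support_subset _ hsupp, sum_image (by intro a _ b _ h; simpa using h)]
  simp only [fwdDiff_iter_single_apply_sub, zsmul_eq_mul, abs_mul]
  simp [← sum_mul, ← Nat.cast_sum, Nat.sum_range_choose]

lemma fwdDiff_one_eq_single_of_step {G : Type*} [AddCommGroup G] {f : ℤ → G} {i : ℤ} {α β : G}
    (hle : ∀ j, j ≤ i → f j = α) (hgt : ∀ j, i < j → f j = β) : Δ_[1] f = Pi.single i (β - α) := by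
  ext m
  rw [fwdDiff]
  rcases lt_trichotomy m i with h | rfl | h
  · rw [hle _ h, hle _ h.le, Pi.single_eq_of_ne h.ne, sub_self]
  · rw [hgt _ (lt_add_one m), hle _ le_rfl, Pi.single_eq_same]
  · rw [hgt _ (by omega), hgt _ h, Pi.single_eq_of_ne h.ne', sub_self]

theorem step_signal_finite_diff_l1_general (k : ℕ) (hk : 0 < k) (i : ℤ) (α β : ℝ)
    (f : ℤ → ℝ)
    (hle : ∀ j : ℤ, j ≤ i → f j = α) (hgt : ∀ j : ℤ, i < j → f j = β) :
    ∑ᶠ m : ℤ,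
        |∑ j ∈ Finset.range (k + 1), (-1 : ℝ) ^ (j + k) * (k.choose j : ℝ) * f (m + j)|
      = 2 ^ (k - 1) * |α - β| := by
  obtain ⟨n, rfl⟩ : ∃ n, k = n + 1 := ⟨k - 1, by omega⟩
  simp_rw [← fwdDiff_iter_one_eq_sum, Function.iterate_succ_apply,
    fwdDiff_one_eq_single_of_step hle hgt]
  rw [finsum_abs_fwdDiff_iter_single, abs_sub_comm, Nat.add_sub_cancel]

theorem step_signal_finite_diff_l1 (k : ℕ) (hk : 0 < k) (i : ℤ) (α β : ℝ)
    (hαβ : α ≠ β) (f : ℤ → ℝ)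
    (hle : ∀ j : ℤ, j ≤ i → f j = α) (hgt : ∀ j : ℤ, i < j → f j = β) :
    ∑ᶠ m : ℤ,
        |∑ j ∈ Finset.range (k + 1), (-1 : ℝ) ^ (j + k) * (k.choose j : ℝ) * f (m + j)|
      = 2 ^ (k - 1) * |α - β| :=
  step_signal_finite_diff_l1_general k hk i α β f hle hgt
end

section
/- Let f : ℤ → ℝ be piecewise constant with jump set S = { j : f_{j+1} ≠ f_j } finite, and suppose any two distinct jump indices j₁, j₂ ∈ S satisfy |j₁ - j₂| > k. Then ∑_m |(T_k f)_m| = 2^{k-1} ∑_m |(T_1 f)_m|, i.e., the k-th order finite-difference ℓ¹ seminorm equals 2^{k-1} times the total variation seminorm of f. -/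
/-!
Write `Δ` for the forward difference with step `1`, so that the sum in the statement is
`Δ^[k] f m`. Expanding `Δ^[k] f = Δ^[k-1] (Δ f)` binomially gives
`Δ^[k] f m = ∑_{i<k} ± C(k-1, i) Δ f (m + i)`. The indices `m, …, m + k - 1` are too close to
contain two jumps, so at most one term of this sum is nonzero and
`|Δ^[k] f m| = ∑_{i<k} C(k-1, i) |Δ f (m + i)|`. Summing over `m`, each shifted copy of the
total variation appears with weight `C(k-1, i)`, and these weights add up to `2^(k-1)`.
-/

open Finset fwdDiff

theorem Finset.abs_sum_of_subsingleton_support {ι α : Type*} [AddCommGroup α] [LinearOrder α]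
    [IsOrderedAddMonoid α] (s : Finset ι) (f : ι → α)
    (hf : ((s : Set ι) ∩ Function.support f).Subsingleton) :
    |∑ i ∈ s, f i| = ∑ i ∈ s, |f i| := by
  by_cases h : ∃ i ∈ s, f i ≠ 0
  · obtain ⟨i, hi, hfi⟩ := h
    have hzero : ∀ j ∈ s, j ≠ i → f j = 0 := fun j hj hji => by
      by_contra hfj
      exact hji (hf ⟨hj, hfj⟩ ⟨hi, hfi⟩)
    rw [sum_eq_single_of_mem i hi hzero,
      sum_eq_single_of_mem i hi fun j hj hji => by rw [hzero j hj hji, abs_zero]]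
  · push Not at h
    rw [sum_eq_zero h, abs_zero, sum_eq_zero fun i hi => by rw [h i hi, abs_zero]]

theorem finsum_sum_mul_comp_add {ι M R : Type*} [AddGroup M] [NonUnitalNonAssocSemiring R]
    (s : Finset ι) (c : ι → R) (τ : ι → M) (g : M → R) (hg : g.HasFiniteSupport) :
    ∑ᶠ m, ∑ i ∈ s, c i * g (m + τ i) = (∑ i ∈ s, c i) * ∑ᶠ m, g m := by
  have hshift : ∀ i, (fun m => g (m + τ i)).HasFiniteSupport := fun i =>
    hg.comp_of_injective (add_left_injective (τ i))
  rw [finsum_sum_comm s (fun m i => c i * g (m + τ i)) fun i _ => (hshift i).mul_right _,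
    sum_mul]
  refine sum_congr rfl fun i _ => ?_
  rw [← mul_finsum' _ _ (hshift i)]
  exact congrArg (c i * ·) (finsum_comp_equiv (Equiv.addRight (τ i)))

section fwdDiff

variable {M G : Type*} [AddCommMonoid M] [AddCommGroup G] (h : M) (f : M → G)

theorem support_fwdDiff : (Δ_[h] f).support = {y | f (y + h) ≠ f y} := by
  ext y
  simp [fwdDiff, sub_ne_zero]

theorem fwdDiff_iter_succ_eq_sum_shift_fwdDiff (n : ℕ) (y : M) :
    (Δ_[h])^[n + 1] f y
      = ∑ i ∈ range (n + 1), ((-1 : ℤ) ^ (n - i) * n.choose i) • Δ_[h] f (y + i • h) := by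
  rw [Function.iterate_succ_apply, fwdDiff_iter_eq_sum_shift]

end fwdDiff

theorem sum_range_neg_one_pow_mul_choose_eq_fwdDiff_iter {R : Type*} [CommRing R] (f : ℤ → R)
    (k : ℕ) (m : ℤ) :
    ∑ j ∈ range (k + 1), (-1 : R) ^ (j + k) * (k.choose j : R) * f (m + j)
      = (Δ_[1])^[k] f m := by
  rw [fwdDiff_iter_eq_sum_shift]
  refine sum_congr rfl fun j hj => ?_
  have hjk : j + k = (k - j) + 2 * j := by grind
  rw [hjk, pow_add, pow_mul, neg_one_sq, one_pow, mul_one, zsmul_eq_mul, nsmul_one]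
  push_cast
  ring

theorem abs_fwdDiff_iter_succ_of_pairwise (f : ℤ → ℝ) (n : ℕ)
    (hsep : (Δ_[1] f).support.Pairwise fun j₁ j₂ => (n : ℤ) < |j₁ - j₂|) (m : ℤ) :
    |(Δ_[1])^[n + 1] f m| = ∑ i ∈ range (n + 1), (n.choose i : ℝ) * |Δ_[1] f (m + i)| := by
  rw [fwdDiff_iter_succ_eq_sum_shift_fwdDiff, abs_sum_of_subsingleton_support]
  · refine sum_congr rfl fun i _ => ?_
    rw [zsmul_eq_mul, abs_mul]
    simp
  · rintro i ⟨hi, hi₀⟩ i' ⟨hi', hi'₀⟩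
    by_contra hne
    have hsep' : (n : ℤ) < |m + i • 1 - (m + i' • 1)| :=
      hsep (right_ne_zero_of_smul hi₀) (right_ne_zero_of_smul hi'₀) (by simpa using hne)
    simp only [coe_range, Set.mem_Iio] at hi hi'
    rw [add_sub_add_left_eq_sub, lt_abs] at hsep'
    simp only [nsmul_eq_mul, mul_one] at hsep'
    omega

theorem piecewise_constant_HOTV_eq_TV (k : ℕ) (hk : 0 < k) (f : ℤ → ℝ)
    (hS : {j : ℤ | f (j + 1) ≠ f j}.Finite)
    (hsep : ∀ j₁ ∈ {j : ℤ | f (j + 1) ≠ f j}, ∀ j₂ ∈ {j : ℤ | f (j + 1) ≠ f j},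
      j₁ ≠ j₂ → (k : ℤ) < |j₁ - j₂|) :
    ∑ᶠ m : ℤ,
        |∑ j ∈ Finset.range (k + 1), (-1 : ℝ) ^ (j + k) * (k.choose j : ℝ) * f (m + j)|
      = 2 ^ (k - 1) * ∑ᶠ m : ℤ, |f (m + 1) - f m| := by
  obtain ⟨n, rfl⟩ := Nat.exists_eq_add_one_of_ne_zero hk.ne'
  rw [← support_fwdDiff] at hS hsep
  have hsep' : (Δ_[1] f).support.Pairwise fun j₁ j₂ => (n : ℤ) < |j₁ - j₂| :=
    fun j₁ h₁ j₂ h₂ hne => lt_of_le_of_lt (by omega) (hsep j₁ h₁ j₂ h₂ hne)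
  have hTV : (fun m => |Δ_[1] f m|).HasFiniteSupport :=
    Function.HasFiniteSupport.fun_comp hS abs_zero
  simp_rw [sum_range_neg_one_pow_mul_choose_eq_fwdDiff_iter,
    abs_fwdDiff_iter_succ_of_pairwise f n hsep']
  rw [finsum_sum_mul_comp_add _ _ _ _ hTV, ← Nat.cast_sum, Nat.sum_range_choose]
  simp [fwdDiff]
end
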